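/- arXiv:1910.00172 — 2 statements merged into one kernel-verified Lean document; each statement's English description precedes it below -/
import Mathlib

section
/- Unconditional energy stability of the first-order IEQ-DG scheme with projection (inequality (3.10) of Theorem 3.1): let Δt > 0, let T : H → H be a self-adjoint bounded linear operator, let P : H → V be the orthogonal projection onto V, let u⁰, u¹, q⁰, q¹ ∈ V and U⁰ ∈ H, and set U¹ := U⁰ + (1/2) T (u¹ − u⁰). Suppose that for all φ, ψ ∈ V: ⟨(u¹ − u⁰)/Δt, φ⟩ + b(u¹, φ) = −A(φ, q¹) − ⟨T U¹, φ⟩, ⟨q⁰, ψ⟩ = A(u⁰, ψ) and ⟨q¹, ψ⟩ = A(u¹, ψ). Then E(u¹, q¹, P U¹) ≤ E(u⁰, q⁰, U⁰) − (1/Δt)‖u¹ − u⁰‖² − (1/2)‖q¹ − q⁰‖² − ‖U¹ − U⁰‖² − (1/2) b(u¹ − u⁰, u¹ − u⁰), for any Δt > 0. -/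
/-!
Testing the first equation of the scheme with `φ = u¹ - u⁰` and rewriting each term with the
polarization identity `2⟪x, x - y⟫ = ‖x‖² - ‖y‖² + ‖x - y‖²` (for `A` through the equations
defining `q⁰, q¹`, for `T` through its self-adjointness and `T (u¹ - u⁰) = 2 (U¹ - U⁰)`) gives the
energy estimate as an identity for the unprojected `U¹`. The projection does not increase norms.
-/

open scoped InnerProductSpace

theorem two_mul_real_inner_sub_eq {F : Type*} [NormedAddCommGroup F] [InnerProductSpace ℝ F]
    (x y : F) : 2 * ⟪x, x - y⟫_ℝ = ‖x‖ ^ 2 - ‖y‖ ^ 2 + ‖x - y‖ ^ 2 := by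
  rw [inner_sub_right, real_inner_self_eq_norm_sq, norm_sub_sq_real]
  ring

theorem LinearMap.two_mul_apply_sub_eq_of_symm {R M : Type*} [CommRing R] [AddCommGroup M]
    [Module R M] (b : M →ₗ[R] M →ₗ[R] R) (hb : ∀ x y, b x y = b y x) (x y : M) :
    2 * b x (x - y) = b x x - b y y + b (x - y) (x - y) := by
  simp only [map_sub, LinearMap.sub_apply, hb y x]
  ring

theorem stmt_5_general
    {H : Type*} [NormedAddCommGroup H] [InnerProductSpace ℝ H]
    (V : Submodule ℝ H) [FiniteDimensional ℝ V]
    (A : V →ₗ[ℝ] V →ₗ[ℝ] ℝ)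
    (b : V →ₗ[ℝ] V →ₗ[ℝ] ℝ)
    (hb_symm : ∀ x y : V, b x y = b y x)
    (E : V → V → H → ℝ)
    (hE : ∀ (u q : V) (U : H), E u q U = (1/2) * ‖(q : H)‖^2 + ‖U‖^2 + (1/2) * b u u)
    (Δt : ℝ)
    (T : H →L[ℝ] H)
    (hT : ∀ x y : H, (inner ℝ (T x) y : ℝ) = (inner ℝ x (T y) : ℝ))
    (u₀ u₁ q₀ q₁ : V) (U₀ U₁ : H)
    (hU₁ : U₁ = U₀ + (1/2 : ℝ) • T ((u₁ : H) - (u₀ : H)))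
    (heq1 : ∀ φ : V,
      (inner ℝ ((1/Δt) • ((u₁ : H) - (u₀ : H))) (φ : H) : ℝ) + b u₁ φ
        = -A φ q₁ - (inner ℝ (T U₁) (φ : H) : ℝ))
    (heq2 : ∀ ψ : V, (inner ℝ (q₀ : H) (ψ : H) : ℝ) = A u₀ ψ)
    (heq3 : ∀ ψ : V, (inner ℝ (q₁ : H) (ψ : H) : ℝ) = A u₁ ψ) :
    E u₁ q₁ ((V.orthogonalProjectionOnto U₁ : V) : H)
      ≤ E u₀ q₀ U₀ - (1/Δt) * ‖(u₁ : H) - (u₀ : H)‖^2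
        - (1/2) * ‖(q₁ : H) - (q₀ : H)‖^2 - ‖U₁ - U₀‖^2
        - (1/2) * b (u₁ - u₀) (u₁ - u₀) := by
  have htest := heq1 (u₁ - u₀)
  rw [Submodule.coe_sub, real_inner_smul_left, real_inner_self_eq_norm_sq] at htest
  have hA : 2 * A (u₁ - u₀) q₁ = ‖(q₁ : H)‖ ^ 2 - ‖(q₀ : H)‖ ^ 2 + ‖(q₁ : H) - q₀‖ ^ 2 := by
    rw [map_sub, LinearMap.sub_apply, ← heq3, ← heq2, ← inner_sub_left, real_inner_comm,
      two_mul_real_inner_sub_eq]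
  have hTu : T ((u₁ : H) - u₀) = (2 : ℝ) • (U₁ - U₀) := by
    rw [hU₁, add_sub_cancel_left, smul_smul]
    norm_num
  have hTU : ⟪T U₁, (u₁ : H) - u₀⟫_ℝ = ‖U₁‖ ^ 2 - ‖U₀‖ ^ 2 + ‖U₁ - U₀‖ ^ 2 := by
    rw [hT, hTu, real_inner_smul_right, two_mul_real_inner_sub_eq]
  have hb := b.two_mul_apply_sub_eq_of_symm hb_symm u₁ u₀
  have hP : ‖((V.orthogonalProjectionOnto U₁ : V) : H)‖ ^ 2 ≤ ‖U₁‖ ^ 2 :=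
    pow_le_pow_left₀ (norm_nonneg _) (V.norm_orthogonalProjectionOnto_apply_le U₁) 2
  rw [hE, hE]
  linarith

/-- Unconditional energy stability of the first-order IEQ-DG scheme with projection
(inequality (3.10) of Theorem 3.1). -/
theorem stmt_5
    {H : Type*} [NormedAddCommGroup H] [InnerProductSpace ℝ H] [CompleteSpace H]
    (V : Submodule ℝ H) [FiniteDimensional ℝ V]
    (A : V →ₗ[ℝ] V →ₗ[ℝ] ℝ)
    (b : V →ₗ[ℝ] V →ₗ[ℝ] ℝ)
    (hb_symm : ∀ x y : V, b x y = b y x)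
    (hb_pos : ∀ x : V, 0 ≤ b x x)
    (E : V → V → H → ℝ)
    (hE : ∀ (u q : V) (U : H), E u q U = (1/2) * ‖(q : H)‖^2 + ‖U‖^2 + (1/2) * b u u)
    (Δt : ℝ) (hΔt : 0 < Δt)
    (T : H →L[ℝ] H)
    (hT : ∀ x y : H, (inner ℝ (T x) y : ℝ) = (inner ℝ x (T y) : ℝ))
    (u₀ u₁ q₀ q₁ : V) (U₀ U₁ : H)
    (hU₁ : U₁ = U₀ + (1/2 : ℝ) • T ((u₁ : H) - (u₀ : H)))
    (heq1 : ∀ φ : V,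
      (inner ℝ ((1/Δt) • ((u₁ : H) - (u₀ : H))) (φ : H) : ℝ) + b u₁ φ
        = -A φ q₁ - (inner ℝ (T U₁) (φ : H) : ℝ))
    (heq2 : ∀ ψ : V, (inner ℝ (q₀ : H) (ψ : H) : ℝ) = A u₀ ψ)
    (heq3 : ∀ ψ : V, (inner ℝ (q₁ : H) (ψ : H) : ℝ) = A u₁ ψ) :
    E u₁ q₁ ((V.orthogonalProjectionOnto U₁ : V) : H)
      ≤ E u₀ q₀ U₀ - (1/Δt) * ‖(u₁ : H) - (u₀ : H)‖^2
        - (1/2) * ‖(q₁ : H) - (q₀ : H)‖^2 - ‖U₁ - U₀‖^2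
        - (1/2) * b (u₁ - u₀) (u₁ - u₀) :=
  stmt_5_general V A b hb_symm E hE Δt T hT u₀ u₁ q₀ q₁ U₀ U₁ hU₁ heq1 heq2 heq3
end

section
/- Unconditional energy stability of the second-order IEQ-DG scheme with projection (inequality (3.13) of Theorem 3.2): let Δt > 0, let T : H → H be a self-adjoint bounded linear operator, let P : H → V be the orthogonal projection onto V, let u⁰, u¹, q⁰, q¹ ∈ V and U⁰ ∈ H, and set U¹ := U⁰ + (1/2) T (u¹ − u⁰). Suppose that for all φ, ψ ∈ V: ⟨(u¹ − u⁰)/Δt, φ⟩ + b((u⁰ + u¹)/2, φ) = −A(φ, (q⁰ + q¹)/2) − (1/2)⟨T (U¹ + U⁰), φ⟩, ⟨q⁰, ψ⟩ = A(u⁰, ψ) and ⟨q¹, ψ⟩ = A(u¹, ψ). Then E(u¹, q¹, P U¹) ≤ E(u¹, q¹, U¹) = E(u⁰, q⁰, U⁰) − (1/Δt)‖u¹ − u⁰‖², independent of the size of Δt. -/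
/-!
Test the first equation of the scheme with `φ = u₁ - u₀`. Every term becomes a difference of
squares `⟪x + y, x - y⟫ = ‖x‖² - ‖y‖²`: the penalty term by symmetry of `b`, the `A` term after
replacing `A uᵢ` by `⟪qᵢ, ·⟫`, and the nonlinear term because `T` is self-adjoint and
`½ T (u₁ - u₀) = U₁ - U₀`. What remains is the dissipation `‖u₁ - u₀‖² / Δt`. The projection
inequality holds because an orthogonal projection does not increase norms.
-/

open scoped RealInnerProductSpace

theorem real_inner_add_sub_eq_norm_sq_sub_norm_sq {F : Type*} [NormedAddCommGroup F]
    [InnerProductSpace ℝ F] (x y : F) : ⟪x + y, x - y⟫ = ‖x‖ ^ 2 - ‖y‖ ^ 2 := by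
  rw [inner_add_left, inner_sub_right, inner_sub_right, real_inner_self_eq_norm_sq,
    real_inner_self_eq_norm_sq, real_inner_comm x y]
  ring

theorem LinearMap.apply_add_sub_of_symm {R M : Type*} [CommRing R] [AddCommGroup M] [Module R M]
    (b : M →ₗ[R] M →ₗ[R] R) (hb : ∀ x y, b x y = b y x) (x y : M) :
    b (x + y) (x - y) = b x x - b y y := by
  simp only [map_add, map_sub, LinearMap.add_apply, hb y x]
  ring

theorem LinearMap.IsSymmetric.mul_inner_add_eq_norm_sq_sub_norm_sq {H : Type*}
    [NormedAddCommGroup H] [InnerProductSpace ℝ H] {T : H →ₗ[ℝ] H} (hT : T.IsSymmetric)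
    {c : ℝ} {d U₀ U₁ : H} (hU₁ : U₁ = U₀ + c • T d) :
    c * ⟪T (U₁ + U₀), d⟫ = ‖U₁‖ ^ 2 - ‖U₀‖ ^ 2 := by
  have hincrement : c • T d = U₁ - U₀ := by rw [hU₁, add_sub_cancel_left]
  rw [hT, ← real_inner_smul_right, hincrement, real_inner_add_sub_eq_norm_sq_sub_norm_sq]

theorem stmt_7_general
    {H : Type*} [NormedAddCommGroup H] [InnerProductSpace ℝ H]
    (V : Submodule ℝ H) [FiniteDimensional ℝ V]
    (A : V →ₗ[ℝ] V →ₗ[ℝ] ℝ)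
    (b : V →ₗ[ℝ] V →ₗ[ℝ] ℝ)
    (hb_symm : ∀ x y : V, b x y = b y x)
    (E : V → V → H → ℝ)
    (hE : ∀ (u q : V) (U : H), E u q U = (1/2) * ‖(q : H)‖^2 + ‖U‖^2 + (1/2) * b u u)
    (Δt : ℝ)
    (T : H →L[ℝ] H)
    (hT : ∀ x y : H, (inner ℝ (T x) y : ℝ) = (inner ℝ x (T y) : ℝ))
    (u₀ u₁ q₀ q₁ : V) (U₀ U₁ : H)
    (hU₁ : U₁ = U₀ + (1/2 : ℝ) • T ((u₁ : H) - (u₀ : H)))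
    (heq1 : ∀ φ : V,
      (inner ℝ ((1/Δt) • ((u₁ : H) - (u₀ : H))) (φ : H) : ℝ)
          + b ((1/2 : ℝ) • (u₀ + u₁)) φ
        = -A φ ((1/2 : ℝ) • (q₀ + q₁))
          - (1/2) * (inner ℝ (T (U₁ + U₀)) (φ : H) : ℝ))
    (heq2 : ∀ ψ : V, (inner ℝ (q₀ : H) (ψ : H) : ℝ) = A u₀ ψ)
    (heq3 : ∀ ψ : V, (inner ℝ (q₁ : H) (ψ : H) : ℝ) = A u₁ ψ) :
    E u₁ q₁ ((Submodule.orthogonalProjection V U₁ : V) : H) ≤ E u₁ q₁ U₁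
      ∧ E u₁ q₁ U₁ = E u₀ q₀ U₀ - (1/Δt) * ‖(u₁ : H) - (u₀ : H)‖^2 := by
  have htime : ⟪(1 / Δt) • ((u₁ : H) - u₀), ((u₁ - u₀ : V) : H)⟫
      = 1 / Δt * ‖(u₁ : H) - u₀‖ ^ 2 := by
    rw [Submodule.coe_sub, real_inner_smul_left, real_inner_self_eq_norm_sq]
  have hpenalty : b ((1 / 2 : ℝ) • (u₀ + u₁)) (u₁ - u₀) = 1 / 2 * (b u₁ u₁ - b u₀ u₀) := by
    rw [map_smul, LinearMap.smul_apply, add_comm, b.apply_add_sub_of_symm hb_symm, smul_eq_mul]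
  have hflux : A (u₁ - u₀) ((1 / 2 : ℝ) • (q₀ + q₁)) = 1 / 2 * (‖(q₁ : H)‖ ^ 2 - ‖(q₀ : H)‖ ^ 2) := by
    rw [map_sub, LinearMap.sub_apply, ← heq2, ← heq3, ← inner_sub_left, Submodule.coe_smul,
      real_inner_smul_right, Submodule.coe_add, add_comm, real_inner_comm,
      real_inner_add_sub_eq_norm_sq_sub_norm_sq]
  have hIEQ : 1 / 2 * ⟪T (U₁ + U₀), ((u₁ - u₀ : V) : H)⟫ = ‖U₁‖ ^ 2 - ‖U₀‖ ^ 2 :=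
    LinearMap.IsSymmetric.mul_inner_add_eq_norm_sq_sub_norm_sq (T := (T : H →ₗ[ℝ] H)) hT hU₁
  have hscheme := heq1 (u₁ - u₀)
  refine ⟨?_, ?_⟩
  · simp only [hE]
    gcongr
    exact V.norm_orthogonalProjectionOnto_apply_le U₁
  · simp only [hE]
    linarith

/-- Unconditional energy stability of the second-order IEQ-DG scheme with projection
(inequality (3.13) of Theorem 3.2). -/
theorem stmt_7
    {H : Type*} [NormedAddCommGroup H] [InnerProductSpace ℝ H] [CompleteSpace H]
    (V : Submodule ℝ H) [FiniteDimensional ℝ V]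
    (A : V →ₗ[ℝ] V →ₗ[ℝ] ℝ)
    (b : V →ₗ[ℝ] V →ₗ[ℝ] ℝ)
    (hb_symm : ∀ x y : V, b x y = b y x)
    (hb_pos : ∀ x : V, 0 ≤ b x x)
    (E : V → V → H → ℝ)
    (hE : ∀ (u q : V) (U : H), E u q U = (1/2) * ‖(q : H)‖^2 + ‖U‖^2 + (1/2) * b u u)
    (Δt : ℝ) (hΔt : 0 < Δt)
    (T : H →L[ℝ] H)
    (hT : ∀ x y : H, (inner ℝ (T x) y : ℝ) = (inner ℝ x (T y) : ℝ))
    (u₀ u₁ q₀ q₁ : V) (U₀ U₁ : H)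
    (hU₁ : U₁ = U₀ + (1/2 : ℝ) • T ((u₁ : H) - (u₀ : H)))
    (heq1 : ∀ φ : V,
      (inner ℝ ((1/Δt) • ((u₁ : H) - (u₀ : H))) (φ : H) : ℝ)
          + b ((1/2 : ℝ) • (u₀ + u₁)) φ
        = -A φ ((1/2 : ℝ) • (q₀ + q₁))
          - (1/2) * (inner ℝ (T (U₁ + U₀)) (φ : H) : ℝ))
    (heq2 : ∀ ψ : V, (inner ℝ (q₀ : H) (ψ : H) : ℝ) = A u₀ ψ)
    (heq3 : ∀ ψ : V, (inner ℝ (q₁ : H) (ψ : H) : ℝ) = A u₁ ψ) :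
    E u₁ q₁ ((Submodule.orthogonalProjection V U₁ : V) : H) ≤ E u₁ q₁ U₁
      ∧ E u₁ q₁ U₁ = E u₀ q₀ U₀ - (1/Δt) * ‖(u₁ : H) - (u₀ : H)‖^2 :=
  stmt_7_general V A b hb_symm E hE Δt T hT u₀ u₁ q₀ q₁ U₀ U₁ hU₁ heq1 heq2 heq3
end
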